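/- Let D be a real M×M skew-symmetric matrix, Y⁰ ∈ ℝ^M, r = 1, γ ∈ (0,1). Define Ỹ₁(t) = Y⁰ + t D Y⁰ + (t²/(1+γ)) D² Y⁰. If τ‖D‖ ≤ √((1-γ²)/2), then ‖Ỹ₁(t)‖ ≤ ‖Y⁰‖ for all t ∈ [0, τ]. -/

import Mathlib

open Matrix

/-- View a plain vector in `Fin M → ℝ` as an element of Euclidean space. -/
noncomputable def vecE {M : ℕ} (v : Fin M → ℝ) : EuclideanSpace ℝ (Fin M) :=
  (WithLp.equiv 2 (Fin M → ℝ)).symm v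

theorem strong_stability_r_one {M : ℕ} (D : Matrix (Fin M) (Fin M) ℝ)
    (hD : D + D.transpose = 0) (Y0 : EuclideanSpace ℝ (Fin M)) (γ : ℝ)
    (hγ : γ ∈ Set.Ioo (0 : ℝ) 1) (τ : ℝ) (hτ : 0 ≤ τ)
    (hCFL : τ * ‖Matrix.toEuclideanCLM (𝕜 := ℝ) D‖ ≤ Real.sqrt ((1 - γ ^ 2) / 2)) :
    ∀ t ∈ Set.Icc (0 : ℝ) τ,
      ‖Y0 + t • vecE (D.mulVec Y0) + (t ^ 2 / (1 + γ)) • vecE ((D ^ 2).mulVec Y0)‖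
        ≤ ‖Y0‖ := by
  obtain ⟨hγ0, hγ1⟩ := hγ
  intro t ht
  obtain ⟨ht0, htτ⟩ := ht
  set A := Matrix.toEuclideanCLM (𝕜 := ℝ) D with hA
  -- identify the vectors with applications of A
  have h1 : vecE (D.mulVec Y0) = A Y0 := rfl
  have h2 : vecE ((D ^ 2).mulVec Y0) = A (A Y0) := by
    have : Matrix.toEuclideanCLM (𝕜 := ℝ) (D ^ 2) = A * A := by
      rw [pow_two, _root_.map_mul]
    have h0 : vecE ((D ^ 2).mulVec Y0) = Matrix.toEuclideanCLM (𝕜 := ℝ) (D ^ 2) Y0 := rfl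
    rw [h0, this]; rfl
  -- skew-adjointness
  have hstar : star D = -D := by
    rw [Matrix.star_eq_conjTranspose]
    have : D.conjTranspose = D.transpose := by
      ext i j; simp [Matrix.conjTranspose_apply]
    rw [this]
    exact (neg_eq_of_add_eq_zero_right hD).symm
  have hadj : ContinuousLinearMap.adjoint A = -A := by
    rw [← ContinuousLinearMap.star_eq_adjoint, hA, ← map_star, hstar, map_neg]
  have hskew : ∀ x y : EuclideanSpace ℝ (Fin M),
      inner ℝ (A x) y = -(inner ℝ x (A y) : ℝ) := by
    intro x y
    rw [← ContinuousLinearMap.adjoint_inner_right, hadj]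
    simp
  have hself : ∀ x : EuclideanSpace ℝ (Fin M), (inner ℝ x (A x) : ℝ) = 0 := by
    intro x
    have h := hskew x x
    have h2 : (inner ℝ (A x) x : ℝ) = inner ℝ x (A x) := real_inner_comm _ _
    linarith
  have hYv : (inner ℝ Y0 (A (A Y0)) : ℝ) = -‖A Y0‖ ^ 2 := by
    have h := hskew Y0 (A Y0)
    rw [real_inner_self_eq_norm_sq] at h
    linarith
  set u := A Y0 with hu
  set v := A (A Y0) with hv
  clear_value u v
  set c := t ^ 2 / (1 + γ) with hc
  have h1γ : (0:ℝ) < 1 + γ := by linarith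
  have huY : (inner ℝ Y0 u : ℝ) = 0 := by rw [hu]; exact hself Y0
  have huv : (inner ℝ u v : ℝ) = 0 := by rw [hu, hv]; exact hself (A Y0)
  have s1 : (inner ℝ u Y0 : ℝ) = 0 := by rw [real_inner_comm]; exact huY
  have s2 : (inner ℝ v u : ℝ) = 0 := by rw [real_inner_comm]; exact huv
  have s3 : (inner ℝ v Y0 : ℝ) = -‖u‖ ^ 2 := by rw [real_inner_comm]; exact hYv
  -- expand the squared norm
  have hexpand : ‖Y0 + t • u + c • v‖ ^ 2
      = ‖Y0‖ ^ 2 + (t ^ 2 - 2 * c) * ‖u‖ ^ 2 + c ^ 2 * ‖v‖ ^ 2 := by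
    have e1 : ‖Y0 + t • u + c • v‖ ^ 2
        = (inner ℝ (Y0 + t • u + c • v) (Y0 + t • u + c • v) : ℝ) :=
      (real_inner_self_eq_norm_sq _).symm
    rw [e1]
    simp only [inner_add_left, inner_add_right, inner_smul_left, inner_smul_right,
      real_inner_self_eq_norm_sq, RCLike.inner_apply, conj_trivial, huY, huv, hYv, s1, s2, s3]
    ring
  have hvle : ‖v‖ ≤ ‖A‖ * ‖u‖ := by rw [hu, hv]; exact A.le_opNorm (A Y0)
  have hAn : (0:ℝ) ≤ ‖A‖ := norm_nonneg _
  have hun : (0:ℝ) ≤ ‖u‖ := norm_nonneg _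
  have h0 : (0:ℝ) ≤ (1 - γ ^ 2) / 2 := by nlinarith
  have hts : t ^ 2 * ‖A‖ ^ 2 ≤ 1 - γ ^ 2 := by
    have hb : (τ * ‖A‖) ^ 2 ≤ Real.sqrt ((1 - γ ^ 2) / 2) ^ 2 :=
      pow_le_pow_left₀ (by positivity) hCFL 2
    rw [Real.sq_sqrt h0] at hb
    have h2 : t ^ 2 * ‖A‖ ^ 2 ≤ τ ^ 2 * ‖A‖ ^ 2 :=
      mul_le_mul_of_nonneg_right (pow_le_pow_left₀ ht0 htτ 2) (sq_nonneg _)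
    have h3 : τ ^ 2 * ‖A‖ ^ 2 = (τ * ‖A‖) ^ 2 := by ring
    linarith
  have hkey : ‖Y0 + t • u + c • v‖ ^ 2 ≤ ‖Y0‖ ^ 2 := by
    rw [hexpand]
    have hv2 : ‖v‖ ^ 2 ≤ ‖A‖ ^ 2 * ‖u‖ ^ 2 := by
      have := pow_le_pow_left₀ (norm_nonneg v) hvle 2
      rw [mul_pow] at this
      exact this
    have hc2 : c ^ 2 * ‖v‖ ^ 2 ≤ c ^ 2 * (‖A‖ ^ 2 * ‖u‖ ^ 2) :=
      mul_le_mul_of_nonneg_left hv2 (sq_nonneg c)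
    have hcoef : (t ^ 2 - 2 * c) + c ^ 2 * ‖A‖ ^ 2 ≤ 0 := by
      generalize hgen : ‖A‖ = s at hts hAn ⊢
      rw [hc, div_pow]
      have expand : (t ^ 2 - 2 * (t ^ 2 / (1 + γ))) + (t ^ 2) ^ 2 / (1 + γ) ^ 2 * s ^ 2
          = -((t ^ 2 * (1 - γ ^ 2) - t ^ 2 * (t ^ 2 * s ^ 2)) / (1 + γ) ^ 2) := by
        field_simp
        ring
      rw [expand, neg_nonpos]
      apply div_nonneg _ (by positivity)
      have hpos : 0 ≤ t ^ 2 * ((1 - γ ^ 2) - t ^ 2 * s ^ 2) :=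
        mul_nonneg (sq_nonneg t) (by linarith only [hts])
      linarith only [hpos]
    have hmain : ((t ^ 2 - 2 * c) + c ^ 2 * ‖A‖ ^ 2) * ‖u‖ ^ 2 ≤ 0 :=
      mul_nonpos_iff.mpr (Or.inr ⟨hcoef, sq_nonneg _⟩)
    have hexp2 : ((t ^ 2 - 2 * c) + c ^ 2 * ‖A‖ ^ 2) * ‖u‖ ^ 2
        = (t ^ 2 - 2 * c) * ‖u‖ ^ 2 + c ^ 2 * (‖A‖ ^ 2 * ‖u‖ ^ 2) := by ring
    linarith
  rw [h1, h2]
  have hfin := Real.sqrt_le_sqrt hkey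
  rwa [Real.sqrt_sq (norm_nonneg _), Real.sqrt_sq (norm_nonneg _)] at hfin
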